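/- Let S, T be open trees (trees with no stumps), and let ≤_lex be the relation on elementary subtrees of S ⊗ T generated by: V ≤_lex U whenever U is obtained from V by replacing, at some edge e = (s,t) with both s,t nodes, the pair of generating relations e^{↑S,T} ≤ e^{↑S} ≤ e occurring in V by the pair e^{↑S,T} ≤ e^{↑T} ≤ e occurring in U (grafted compatibly with the rest of the tree). Then ≤_lex is a partial order on the set of elementary subtrees of S ⊗ T, and the relation generated jointly by ≤_lex and subtree inclusion is also a partial order. -/

import Mathlib

/-!
Count the pairs of an `S`-vertex and a `T`-vertex of an elementary subtree with the first
below the second. In an open tree the two kinds of vertex never meet at one edge, so an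
elementary subtree that grows keeps each of its vertices, with its kind, and the count is
monotone under inclusion. An interchange at `e = (s, t)` destroys the pairs through the
`S`-vertex `e` and through the `T`-vertices of the layer `e^{↑S}`; sending `e` to `(s, t₀)`
for some `t₀ ∈ t^↑`, and the layer to `e`, matches them injectively with pairs of the new
tree other than `((s, t₀), e)`, so the count strictly increases. A count that increases
strictly along interchanges and weakly along inclusions forbids cycles of both relations.
-/

universe u

namespace BroadPaper

/-- A broad relation on `X`: a relation between finite unordered tuples
(multisets) over `X` and elements of `X`. -/
abbrev Rel (X : Type u) : Type u := Multiset X → X → Prop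

variable {X : Type u} {Y : Type u} {A : Type u} {B : Type u} {Z : Type u}

/-- Broad transitivity: if `f₁ ⋯ fₙ ≤ e` and `g̲ᵢ ≤ fᵢ` then `g̲₁ ⋯ g̲ₙ ≤ e`,
encoded via a multiset of pairs `(g̲ᵢ, fᵢ)`. -/
def BTrans (r : Rel X) : Prop :=
  ∀ (p : Multiset (Multiset X × X)) (e : X),
    r (p.map Prod.snd) e → (∀ q ∈ p, r q.1 q.2) → r ((p.map Prod.fst).sum) e

/-- A pre-broad poset: reflexivity plus broad transitivity. -/
def IsPreBroad (r : Rel X) : Prop := (∀ e : X, r {e} e) ∧ BTrans r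

/-- A (commutative) broad poset: a pre-broad poset satisfying antisymmetry. -/
def IsBroad (r : Rel X) : Prop :=
  IsPreBroad r ∧ ∀ e f : X, r {e} f → r {f} e → e = f

/-- Simplicity: letters in any broad relation are pairwise distinct. -/
def Simple (r : Rel X) : Prop := ∀ fs e, r fs e → fs.Nodup

/-- The descendant relation `f ≤_d e`. -/
def descends (r : Rel X) (f e : X) : Prop := ∃ fs, r fs e ∧ f ∈ fs

def Comparable (r : Rel X) (f g : X) : Prop := descends r f g ∨ descends r g f

def Incomp (r : Rel X) (f g : X) : Prop := ¬ descends r f g ∧ ¬ descends r g f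

/-- Blockwise extension of a broad relation to a relation between tuples:
`fs ≤ es` iff `fs = f̲₁ ⋯ f̲ₖ`, `es = e₁ ⋯ eₖ` with `f̲ᵢ ≤ eᵢ`. -/
def tupleLE (r : Rel X) (fs es : Multiset X) : Prop :=
  ∃ p : Multiset (Multiset X × X),
    p.map Prod.snd = es ∧ (p.map Prod.fst).sum = fs ∧ ∀ q ∈ p, r q.1 q.2

/-- A leaf: no tuple strictly below `e`. -/
def IsLeaf (r : Rel X) (e : X) : Prop := ¬ ∃ fs, r fs e ∧ fs ≠ ({e} : Multiset X)

/-- `fs` is the maximum tuple strictly below `e` (written `e^↑`).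
If `fs ≠ 0`, `e` is a node; if `fs = 0`, `e` is a stump. -/
def upTuple (r : Rel X) (e : X) (fs : Multiset X) : Prop :=
  (r fs e ∧ fs ≠ ({e} : Multiset X)) ∧
    ∀ gs, r gs e → gs ≠ ({e} : Multiset X) → tupleLE r gs fs

def IsStump (r : Rel X) (e : X) : Prop := upTuple r e 0

/-- A dendroidally ordered set (tree): a finite simple broad poset in which
every element is a leaf, node or stump, with a `≤_d`-maximum (root). -/
def IsTree (r : Rel X) : Prop :=
  IsBroad r ∧ Finite X ∧ Simple r ∧
    (∀ e : X, IsLeaf r e ∨ ∃ fs, upTuple r e fs) ∧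
    ∃ rt : X, ∀ e, descends r e rt

def IsMaxEl (r : Rel X) (e : X) : Prop := ∀ s, descends r e s → s = e

/-- A forestially ordered set (forest): each element has a unique
`≤_d`-maximal element above it. -/
def IsForest (r : Rel X) : Prop :=
  IsBroad r ∧ Finite X ∧ Simple r ∧
    (∀ e : X, IsLeaf r e ∨ ∃ fs, upTuple r e fs) ∧
    ∀ e : X, ∃! rt : X, IsMaxEl r rt ∧ descends r e rt

/-- A map of broad posets: preserves broad relations (letterwise on tuples). -/
def BroadHom (r : Rel X) (r' : Rel Y) (φ : X → Y) : Prop :=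
  ∀ fs e, r fs e → r' (fs.map φ) (φ e)

/-- `rs` is the root tuple: the tuple of `≤_d`-maximal elements (no repeats). -/
def IsRootTuple (r : Rel X) (rs : Multiset X) : Prop :=
  rs.Nodup ∧ ∀ x, x ∈ rs ↔ IsMaxEl r x

/-- Independent map of forests: `φ(r̲_F)·e̲ ≤ r̲_{F'}` for some tuple `e̲`. -/
def Independent (r : Rel X) (r' : Rel Y) (φ : X → Y) : Prop :=
  ∃ (rs : Multiset X) (rs' : Multiset Y) (es : Multiset Y),
    IsRootTuple r rs ∧ IsRootTuple r' rs' ∧ tupleLE r' (rs.map φ + es) rs'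

/-- The (pre-)broad relation generated by a set of generating relations:
closure under reflexivity and broad transitivity. -/
inductive GenRel (gen : Rel X) : Rel X
  | of : ∀ fs e, gen fs e → GenRel gen fs e
  | refl : ∀ e, GenRel gen {e} e
  | btrans : ∀ (p : Multiset (Multiset X × X)) (e : X),
      GenRel gen (p.map Prod.snd) e → (∀ q ∈ p, GenRel gen q.1 q.2) →
      GenRel gen ((p.map Prod.fst).sum) e

/-- Generators of the tensor product `S ⊗ T`: relations `s̲ × t ≤ (s,t)` and
`s × t̲ ≤ (s,t)`. -/
def tensorGen (rS : Rel A) (rT : Rel B) : Rel (A × B) := fun xs x =>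
  (∃ as, rS as x.1 ∧ xs = as.map fun a => (a, x.2)) ∨
  (∃ bs, rT bs x.2 ∧ xs = bs.map fun b => (x.1, b))

/-- The tensor product broad relation on `A × B`. -/
def tensorRel (rS : Rel A) (rT : Rel B) : Rel (A × B) := GenRel (tensorGen rS rT)

/-- Product of tuples: all pairs from `as` and `bs`. -/
def mprod (as : Multiset A) (bs : Multiset B) : Multiset (A × B) :=
  as.bind fun a => bs.map fun b => (a, b)

end BroadPaper

namespace BroadPaper

/-- The support (edge set) of a broad relation: elements related to
themselves. -/
def support {X : Type u} (r : Rel X) : Set X := {x | r {x} x}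

/-- A tree structure supported on a subset of `X`: a relation whose support
carries the axioms of a dendroidally ordered set. -/
def IsTreeOn {X : Type u} (r : Rel X) : Prop :=
  (∀ fs e, r fs e → e ∈ support r ∧ ∀ f ∈ fs, f ∈ support r) ∧
  BTrans r ∧
  (∀ e f, r {e} f → r {f} e → e = f) ∧
  Simple r ∧
  (∀ e ∈ support r, IsLeaf r e ∨ ∃ fs, upTuple r e fs) ∧
  (∃ rt ∈ support r, ∀ e ∈ support r, descends r e rt) ∧
  (support r).Finite

/-- An elementary subtree of `S ⊗ T`: a subtree all of whose vertices
(generating relations) are `e^{↑S} ≤ e` or `e^{↑T} ≤ e`. -/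
def IsElemSubtree {A B : Type u} (rS : Rel A) (rT : Rel B)
    (r₀ : Rel (A × B)) : Prop :=
  IsTreeOn r₀ ∧ (∀ fs e, r₀ fs e → tensorRel rS rT fs e) ∧
  ∀ e fs, upTuple r₀ e fs →
    ((∃ ss, upTuple rS e.1 ss ∧ fs = ss.map fun a => (a, e.2)) ∨
     (∃ ts, upTuple rT e.2 ts ∧ fs = ts.map fun b => (e.1, b)))

/-- The generating step of the `≤_lex` order: `U` is obtained from `V` by
replacing, at an edge `e`, the configuration `e^{↑S,T} ≤ e^{↑S} ≤ e`
occurring in `V` by the configuration `e^{↑S,T} ≤ e^{↑T} ≤ e` occurring in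
`U`, leaving everything else unchanged. -/
def LexStep {A B : Type u} (rS : Rel A) (rT : Rel B)
    (V U : Rel (A × B)) : Prop :=
  ∃ (e : A × B) (ss : Multiset A) (ts : Multiset B),
    upTuple rS e.1 ss ∧ upTuple rT e.2 ts ∧
    -- `V` contains `e^{↑S,T} ≤ e^{↑S} ≤ e`
    upTuple V e (ss.map fun a => (a, e.2)) ∧
    (∀ a ∈ ss, upTuple V (a, e.2) (ts.map fun b => (a, b))) ∧
    -- `U` contains `e^{↑S,T} ≤ e^{↑T} ≤ e`
    upTuple U e (ts.map fun b => (e.1, b)) ∧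
    (∀ b ∈ ts, upTuple U (e.1, b) (ss.map fun a => (a, b))) ∧
    -- the intermediate layers are genuinely replaced
    (∀ a ∈ ss, ((a, e.2) : A × B) ∉ support U) ∧
    (∀ b ∈ ts, ((e.1, b) : A × B) ∉ support V) ∧
    -- edge sets agree away from the replaced intermediate layers
    (∀ x : A × B, x ∉ ss.map (fun a => (a, e.2)) →
      x ∉ ts.map (fun b => (e.1, b)) → (x ∈ support V ↔ x ∈ support U)) ∧
    -- vertices agree at all other edges
    (∀ (x : A × B) (fs : Multiset (A × B)), x ≠ e →
      x ∉ ss.map (fun a => (a, e.2)) → x ∉ ts.map (fun b => (e.1, b)) →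
      (upTuple V x fs ↔ upTuple U x fs))

section BroadRelation

variable {X : Type u} {r : Rel X}

theorem tupleLE.exists_descends {fs gs : Multiset X} (h : tupleLE r fs gs) {f : X}
    (hf : f ∈ fs) : ∃ g ∈ gs, descends r f g := by
  obtain ⟨p, rfl, rfl, hp⟩ := h
  obtain ⟨_, hm, hfm⟩ := Multiset.mem_join.1 hf
  obtain ⟨q, hq, rfl⟩ := Multiset.mem_map.1 hm
  exact ⟨q.2, Multiset.mem_map_of_mem _ hq, q.1, hp q hq, hfm⟩

theorem descends_refl (hrefl : ∀ e, r {e} e) (e : X) : descends r e e :=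
  ⟨{e}, hrefl e, Multiset.mem_singleton_self e⟩

theorem IsPreBroad.graft [DecidableEq X] (hr : IsPreBroad r) {gs fs : Multiset X} {e g : X}
    (hgs : r gs e) (hg : g ∈ gs) (hfs : r fs g) : r (fs + gs.erase g) e := by
  let p : Multiset (Multiset X × X) := (fs, g) ::ₘ (gs.erase g).map fun x => ({x}, x)
  have hsnd : p.map Prod.snd = gs := by
    simp [p, Multiset.cons_erase hg]
  have hfst : (p.map Prod.fst).sum = fs + gs.erase g := by
    simp [p]
  rw [← hfst]
  refine hr.2 p e (hsnd ▸ hgs) fun q hq => ?_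
  rcases Multiset.mem_cons.1 hq with rfl | hq
  · exact hfs
  · obtain ⟨x, -, rfl⟩ := Multiset.mem_map.1 hq
    exact hr.1 x

theorem IsPreBroad.descends_trans (hr : IsPreBroad r) {f g e : X} (hfg : descends r f g)
    (hge : descends r g e) : descends r f e := by
  classical
  obtain ⟨fs, hfs, hf⟩ := hfg
  obtain ⟨gs, hgs, hg⟩ := hge
  exact ⟨fs + gs.erase g, hr.graft hgs hg hfs, Multiset.mem_add.2 (Or.inl hf)⟩

theorem IsPreBroad.eq_singleton_of_self_mem (hr : IsPreBroad r) (hs : Simple r)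
    {fs : Multiset X} {e : X} (h : r fs e) (he : e ∈ fs) : fs = {e} := by
  classical
  have hdisj := (Multiset.nodup_add.1 (hs _ _ (hr.graft h he h))).2.2
  have hrest : fs.erase e = 0 := Multiset.eq_zero_of_forall_notMem fun z hz =>
    Multiset.disjoint_left.1 hdisj (Multiset.mem_of_mem_erase hz) hz
  rw [← Multiset.cons_erase he, hrest]
  rfl

theorem IsBroad.descends_antisymm (hr : IsBroad r) (hs : Simple r) {e f : X}
    (hfe : descends r f e) (hef : descends r e f) : e = f := by
  classical
  obtain ⟨fs, hfs, hf⟩ := hfe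
  obtain ⟨es, hes, he⟩ := hef
  have hsum := hr.1.eq_singleton_of_self_mem hs (hr.1.graft hfs hf hes)
    (Multiset.mem_add.2 (Or.inl he))
  have hrest : fs.erase f = 0 := by
    have hcard := congrArg Multiset.card hsum
    have hpos := Multiset.card_pos_iff_exists_mem.2 ⟨e, he⟩
    rw [Multiset.card_add, Multiset.card_singleton] at hcard
    exact Multiset.card_eq_zero.1 (by omega)
  rw [hrest, add_zero] at hsum
  have hfs1 : fs = {f} := by
    rw [← Multiset.cons_erase hf, hrest]
    rfl
  exact hr.2 e f (hsum ▸ hes) (hfs1 ▸ hfs)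

theorem IsBroad.not_descends_of_mem_upTuple (hr : IsBroad r) (hs : Simple r) {e f : X}
    {fs : Multiset X} (h : upTuple r e fs) (hf : f ∈ fs) : ¬ descends r e f := fun hd =>
  h.1.2 <| hr.1.eq_singleton_of_self_mem hs h.1.1
    (hr.descends_antisymm hs ⟨fs, h.1.1, hf⟩ hd ▸ hf)

theorem IsPreBroad.not_descends_of_mem_of_mem (hr : IsPreBroad r) (hs : Simple r)
    {fs : Multiset X} {e a a' x : X} (hfs : r fs e) (ha : a ∈ fs) (ha' : a' ∈ fs)
    (hne : a ≠ a') (hxa : descends r x a) (hxa' : descends r x a') : False := by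
  classical
  obtain ⟨gs, hgs, hx⟩ := hxa
  obtain ⟨gs', hgs', hx'⟩ := hxa'
  have ha'' : a' ∈ fs.erase a := (Multiset.mem_erase_of_ne hne.symm).2 ha'
  have h := hr.graft (hr.graft hfs ha hgs) (Multiset.mem_add.2 (Or.inr ha'')) hgs'
  rw [Multiset.erase_add_right_pos _ ha''] at h
  exact Multiset.disjoint_left.1 (Multiset.nodup_add.1 (hs _ _ h)).2.2 hx'
    (Multiset.mem_add.2 (Or.inl hx))

end BroadRelation

section Tensor

variable {A B : Type u} {rS : Rel A} {rT : Rel B}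

theorem descends_of_tensorRel (hS : IsPreBroad rS) (hT : IsPreBroad rT)
    {fs : Multiset (A × B)} {e : A × B} (h : tensorRel rS rT fs e) :
    ∀ f ∈ fs, descends rS f.1 e.1 ∧ descends rT f.2 e.2 := by
  induction h with
  | of fs e hg =>
    rintro f hf
    rcases hg with ⟨as, has, rfl⟩ | ⟨bs, hbs, rfl⟩
    · obtain ⟨a, ha, rfl⟩ := Multiset.mem_map.1 hf
      exact ⟨⟨as, has, ha⟩, descends_refl hT.1 _⟩
    · obtain ⟨b, hb, rfl⟩ := Multiset.mem_map.1 hf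
      exact ⟨descends_refl hS.1 _, ⟨bs, hbs, hb⟩⟩
  | refl e =>
    rintro f hf
    rw [Multiset.mem_singleton.1 hf]
    exact ⟨descends_refl hS.1 _, descends_refl hT.1 _⟩
  | btrans p e _ _ ihe ihp =>
    rintro f hf
    obtain ⟨_, hm, hfm⟩ := Multiset.mem_join.1 hf
    obtain ⟨q, hq, rfl⟩ := Multiset.mem_map.1 hm
    have hfq := ihp q hq f hfm
    have hqe := ihe q.2 (Multiset.mem_map_of_mem _ hq)
    exact ⟨hS.descends_trans hfq.1 hqe.1, hT.descends_trans hfq.2 hqe.2⟩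

def SVert (rS : Rel A) (V : Rel (A × B)) (x : A × B) : Prop :=
  ∃ ss : Multiset A, upTuple rS x.1 ss ∧ upTuple V x (ss.map fun a => (a, x.2))

def TVert (rT : Rel B) (V : Rel (A × B)) (x : A × B) : Prop :=
  ∃ ts : Multiset B, upTuple rT x.2 ts ∧ upTuple V x (ts.map fun b => (x.1, b))

theorem SVert.fst_ne (hS : IsTree rS) (hT : IsTree rT) {V : Rel (A × B)}
    (hV : ∀ fs e, V fs e → tensorRel rS rT fs e) {x : A × B} (hx : SVert rS V x)
    {fs : Multiset (A × B)} (hfs : V fs x) (hne : fs ≠ {x}) {f : A × B} (hf : f ∈ fs) :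
    f.1 ≠ x.1 := by
  obtain ⟨ss, hss, hup⟩ := hx
  obtain ⟨_, hw, gs, hgs, hfg⟩ := (hup.2 fs hfs hne).exists_descends hf
  obtain ⟨a, ha, rfl⟩ := Multiset.mem_map.1 hw
  intro h
  exact hS.1.not_descends_of_mem_upTuple hS.2.2.1 hss ha
    (h ▸ (descends_of_tensorRel hS.1.1 hT.1.1 (hV _ _ hgs) f hfg).1)

theorem TVert.snd_ne (hS : IsTree rS) (hT : IsTree rT) {V : Rel (A × B)}
    (hV : ∀ fs e, V fs e → tensorRel rS rT fs e) {x : A × B} (hx : TVert rT V x)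
    {fs : Multiset (A × B)} (hfs : V fs x) (hne : fs ≠ {x}) {f : A × B} (hf : f ∈ fs) :
    f.2 ≠ x.2 := by
  obtain ⟨ts, hts, hup⟩ := hx
  obtain ⟨_, hw, gs, hgs, hfg⟩ := (hup.2 fs hfs hne).exists_descends hf
  obtain ⟨b, hb, rfl⟩ := Multiset.mem_map.1 hw
  intro h
  exact hT.1.not_descends_of_mem_upTuple hT.2.2.1 hts hb
    (h ▸ (descends_of_tensorRel hS.1.1 hT.1.1 (hV _ _ hgs) f hfg).2)

theorem SVert.not_TVert (hS : IsTree rS) (hT : IsTree rT) {V : Rel (A × B)}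
    (hV : ∀ fs e, V fs e → tensorRel rS rT fs e) {x : A × B} (hx : ¬ IsStump rS x.1)
    (hSx : SVert rS V x) (hTx : TVert rT V x) : False := by
  obtain ⟨ss, hss, hup⟩ := hSx
  obtain ⟨a, ha⟩ := Multiset.exists_mem_of_ne_zero (by rintro rfl; exact hx hss : ss ≠ 0)
  exact hTx.snd_ne hS hT hV hup.1.1 hup.1.2 (Multiset.mem_map_of_mem _ ha) rfl

theorem IsElemSubtree.SVert_or_TVert {U : Rel (A × B)} (hU : IsElemSubtree rS rT U)
    {x : A × B} {fs : Multiset (A × B)} (hfs : U fs x) (hne : fs ≠ {x}) :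
    SVert rS U x ∨ TVert rT U x := by
  obtain ⟨gs, hgs⟩ := (hU.1.2.2.2.2.1 x (hU.1.1 _ _ hfs).1).resolve_left
    fun hleaf => hleaf ⟨fs, hfs, hne⟩
  rcases hU.2.2 x gs hgs with ⟨ss, hss, rfl⟩ | ⟨ts, hts, rfl⟩
  exacts [Or.inl ⟨ss, hss, hgs⟩, Or.inr ⟨ts, hts, hgs⟩]

theorem SVert.mono (hS : IsTree rS) (hT : IsTree rT) {V U : Rel (A × B)}
    (hU : IsElemSubtree rS rT U) (hVU : V ≤ U) {x : A × B} (hx : ¬ IsStump rS x.1)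
    (hSx : SVert rS V x) : SVert rS U x := by
  obtain ⟨ss, hss, hup⟩ := hSx
  have hUx := hVU _ _ hup.1.1
  refine (hU.SVert_or_TVert hUx hup.1.2).resolve_right fun hTx => ?_
  obtain ⟨a, ha⟩ := Multiset.exists_mem_of_ne_zero (by rintro rfl; exact hx hss : ss ≠ 0)
  exact hTx.snd_ne hS hT hU.2.1 hUx hup.1.2 (Multiset.mem_map_of_mem _ ha) rfl

theorem TVert.mono (hS : IsTree rS) (hT : IsTree rT) {V U : Rel (A × B)}
    (hU : IsElemSubtree rS rT U) (hVU : V ≤ U) {x : A × B} (hx : ¬ IsStump rT x.2)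
    (hTx : TVert rT V x) : TVert rT U x := by
  obtain ⟨ts, hts, hup⟩ := hTx
  have hUx := hVU _ _ hup.1.1
  refine (hU.SVert_or_TVert hUx hup.1.2).resolve_left fun hSx => ?_
  obtain ⟨b, hb⟩ := Multiset.exists_mem_of_ne_zero (by rintro rfl; exact hx hts : ts ≠ 0)
  exact hSx.fst_ne hS hT hU.2.1 hUx hup.1.2 (Multiset.mem_map_of_mem _ hb) rfl

/-- The paper's `g` compares the two vertices by `≤_d` in `V`; comparing them coordinatewise,
that is in `S ⊗ T`, works as well and makes the comparison independent of `V`. -/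
def vertexPairs (rS : Rel A) (rT : Rel B) (V : Rel (A × B)) : Set ((A × B) × (A × B)) :=
  {p | SVert rS V p.1 ∧ TVert rT V p.2 ∧ descends rS p.1.1 p.2.1 ∧ descends rT p.1.2 p.2.2}

theorem vertexPairs_finite {V : Rel (A × B)} (hV : IsTreeOn V) :
    (vertexPairs rS rT V).Finite :=
  (hV.2.2.2.2.2.2.prod hV.2.2.2.2.2.2).subset fun _ ⟨⟨_, _, hx⟩, ⟨_, _, hy⟩, _⟩ =>
    ⟨(hV.1 _ _ hx.1.1).1, (hV.1 _ _ hy.1.1).1⟩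

theorem ncard_vertexPairs_le_of_le (hS : IsTree rS) (hT : IsTree rT)
    (hoS : ∀ a, ¬ IsStump rS a) (hoT : ∀ b, ¬ IsStump rT b) {V U : Rel (A × B)}
    (hU : IsElemSubtree rS rT U) (hVU : V ≤ U) :
    (vertexPairs rS rT V).ncard ≤ (vertexPairs rS rT U).ncard :=
  Set.ncard_le_ncard (fun _ ⟨hx, hy, h1, h2⟩ =>
    ⟨hx.mono hS hT hU hVU (hoS _), hy.mono hS hT hU hVU (hoT _), h1, h2⟩)
    (vertexPairs_finite hU.1)

open Classical in
/-- The matching of vertex pairs for an interchange at `e`, where `L` is the layer `e^{↑S}`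
and `b₀ ∈ e.2^↑`. -/
noncomputable def swapPair (e : A × B) (b₀ : B) (L : Multiset (A × B)) :
    (A × B) × (A × B) → (A × B) × (A × B) :=
  Prod.map (fun x => if x = e then (e.1, b₀) else x) (fun y => if y ∈ L then e else y)

theorem swapPair_mapsTo (hS : IsTree rS) (hT : IsPreBroad rT) {V U : Rel (A × B)}
    {e : A × B} {ss : Multiset A} {b₀ : B} (hss : upTuple rS e.1 ss)
    (hb₀ : descends rT b₀ e.2) (hSU : SVert rS U (e.1, b₀)) (hTU : TVert rT U e)
    (hSV : ∀ x, SVert rS V x → x ≠ (e.1, b₀) ∧ (x ≠ e → SVert rS U x))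
    (hTV : ∀ y, TVert rT V y → y ≠ e ∧ (y ∉ ss.map (·, e.2) → TVert rT U y)) :
    Set.MapsTo (swapPair e b₀ (ss.map (·, e.2))) (vertexPairs rS rT V)
      (vertexPairs rS rT U \ {((e.1, b₀), e)}) := by
  rintro ⟨x, y⟩ ⟨hx, hy, h1, h2⟩
  obtain ⟨hxb₀, hxU⟩ := hSV x hx
  obtain ⟨hye, hyU⟩ := hTV y hy
  by_cases hxe : x = e
  · rw [hxe] at h1 h2
    have hyL : y ∉ ss.map (·, e.2) := by
      intro hyL
      obtain ⟨a, ha, rfl⟩ := Multiset.mem_map.1 hyL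
      exact hS.1.not_descends_of_mem_upTuple hS.2.2.1 hss ha h1
    simp only [swapPair, Prod.map, hxe, if_true, hyL, if_false]
    exact ⟨⟨hSU, hyU hyL, h1, hT.descends_trans hb₀ h2⟩, fun h => hye (congrArg Prod.snd h)⟩
  by_cases hyL : y ∈ ss.map (·, e.2)
  · obtain ⟨a, ha, rfl⟩ := Multiset.mem_map.1 hyL
    simp only [swapPair, Prod.map, hxe, if_false, hyL, if_true]
    exact ⟨⟨hxU hxe, hTU, hS.1.1.descends_trans h1 ⟨ss, hss.1.1, ha⟩, h2⟩,
      fun h => hxb₀ (congrArg Prod.fst h)⟩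
  · simp only [swapPair, Prod.map, hxe, if_false, hyL]
    exact ⟨⟨hxU hxe, hyU hyL, h1, h2⟩, fun h => hye (congrArg Prod.snd h)⟩

theorem swapPair_injOn (hS : IsTree rS) {V : Rel (A × B)} {e : A × B} {ss : Multiset A}
    {b₀ : B} (hss : upTuple rS e.1 ss) (hSV : ∀ x, SVert rS V x → x ≠ (e.1, b₀))
    (hTV : ∀ y, TVert rT V y → y ≠ e) :
    Set.InjOn (swapPair e b₀ (ss.map (·, e.2))) (vertexPairs rS rT V) := by
  rintro ⟨x, y⟩ ⟨hx, hy, h1, -⟩ ⟨x', y'⟩ ⟨hx', hy', h1', -⟩ heq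
  obtain ⟨hfx, hgy⟩ := Prod.ext_iff.1 heq
  simp only [swapPair, Prod.map] at hfx hgy
  have hxx : x = x' := by
    split_ifs at hfx with h h'
    · rw [h, h']
    · exact absurd hfx.symm (hSV x' hx')
    · exact absurd hfx (hSV x hx)
    · exact hfx
  subst hxx
  split_ifs at hgy with h h'
  · obtain ⟨a, ha, rfl⟩ := Multiset.mem_map.1 h
    obtain ⟨a', ha', rfl⟩ := Multiset.mem_map.1 h'
    by_contra hne
    exact hS.1.1.not_descends_of_mem_of_mem hS.2.2.1 hss.1.1 ha ha'
      (fun haa => hne (haa ▸ rfl)) h1 h1'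
  · exact absurd hgy.symm (hTV y' hy')
  · exact absurd hgy (hTV y hy)
  · rw [hgy]

theorem LexStep.ncard_vertexPairs_lt (hS : IsTree rS) (hT : IsTree rT)
    (hoS : ∀ a, ¬ IsStump rS a) (hoT : ∀ b, ¬ IsStump rT b) {V U : Rel (A × B)}
    (hV : IsElemSubtree rS rT V) (hU : IsTreeOn U) (h : LexStep rS rT V U) :
    (vertexPairs rS rT V).ncard < (vertexPairs rS rT U).ncard := by
  obtain ⟨e, ss, ts, hss, hts, hVe, hVL, hUe, hUR, -, hVR, -, hvert⟩ := h
  obtain ⟨b₀, hb₀⟩ := Multiset.exists_mem_of_ne_zero (by rintro rfl; exact hoT _ hts : ts ≠ 0)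
  have hR : ∀ x ∈ support V, x ∉ ts.map (e.1, ·) := by
    intro x hx hxR
    obtain ⟨b, hb, rfl⟩ := Multiset.mem_map.1 hxR
    exact hVR b hb hx
  have hSV : ∀ x, SVert rS V x → x ≠ (e.1, b₀) ∧ (x ≠ e → SVert rS U x) := by
    rintro x ⟨s', hs', hup⟩
    have hxR := hR x (hV.1.1 _ _ hup.1.1).1
    refine ⟨fun hx => hxR (hx ▸ Multiset.mem_map_of_mem _ hb₀),
      fun hxe => ⟨s', hs', (hvert x _ hxe (fun hxL => ?_) hxR).1 hup⟩⟩
    obtain ⟨a, ha, rfl⟩ := Multiset.mem_map.1 hxL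
    exact SVert.not_TVert hS hT hV.2.1 (hoS _) ⟨s', hs', hup⟩ ⟨ts, hts, hVL a ha⟩
  have hTV : ∀ y, TVert rT V y → y ≠ e ∧ (y ∉ ss.map (·, e.2) → TVert rT U y) := by
    rintro y ⟨t', ht', hup⟩
    have hye : y ≠ e := by
      rintro rfl
      exact SVert.not_TVert hS hT hV.2.1 (hoS _) ⟨ss, hss, hVe⟩ ⟨t', ht', hup⟩
    exact ⟨hye, fun hyL => ⟨t', ht', (hvert y _ hye hyL (hR y (hV.1.1 _ _ hup.1.1).1)).1 hup⟩⟩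
  have hSU : SVert rS U (e.1, b₀) := ⟨ss, hss, hUR b₀ hb₀⟩
  have hTU : TVert rT U e := ⟨ts, hts, hUe⟩
  have hb₀e : descends rT b₀ e.2 := ⟨ts, hts.1.1, hb₀⟩
  calc (vertexPairs rS rT V).ncard
      ≤ (vertexPairs rS rT U \ {((e.1, b₀), e)}).ncard :=
        Set.ncard_le_ncard_of_injOn _ (swapPair_mapsTo hS hT.1.1 hss hb₀e hSU hTU hSV hTV)
          (swapPair_injOn hS hss (fun x hx => (hSV x hx).1) (fun y hy => (hTV y hy).1))
          (vertexPairs_finite hU).sdiff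
    _ < (vertexPairs rS rT U).ncard :=
        Set.ncard_sdiff_singleton_lt_of_mem ⟨hSU, hTU, descends_refl hS.1.1.1 _, hb₀e⟩
          (vertexPairs_finite hU)

end Tensor

theorem isPartialOrder_reflTransGen_of_lt_or_le {α : Type*} [PartialOrder α]
    {R : α → α → Prop} (φ : α → ℕ) (hφ : Monotone φ) (hR : ∀ a b, R a b → φ a < φ b ∨ a ≤ b) :
    IsPartialOrder α (Relation.ReflTransGen R) := by
  have hgen : ∀ {a b}, Relation.ReflTransGen R a b → φ a < φ b ∨ a ≤ b := by
    intro a b h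
    induction h with
    | refl => exact Or.inr le_rfl
    | tail _ hbc ih =>
      rcases ih with hab | hab <;> rcases hR _ _ hbc with hbc | hbc
      exacts [Or.inl (hab.trans hbc), Or.inl (hab.trans_le (hφ hbc)),
        Or.inl ((hφ hab).trans_lt hbc), Or.inr (hab.trans hbc)]
  refine { refl := fun _ => .refl, trans := fun _ _ _ => .trans, antisymm := fun a b hab hba => ?_ }
  rcases hgen hab with hab | hab <;> rcases hgen hba with hba | hba
  exacts [absurd (hab.trans hba) (lt_irrefl _), absurd (hφ hba) hab.not_ge,
    absurd (hφ hab) hba.not_ge, le_antisymm hab hba]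

/-- For open trees `S`, `T`, the relation `≤_lex` generated
by the interchange steps is a partial order on the set of elementary
subtrees of `S ⊗ T`, and so is the relation generated jointly by `≤_lex`
and subtree inclusion. -/
theorem stmt19 {A B : Type u} (rS : Rel A) (rT : Rel B)
    (hS : IsTree rS) (hT : IsTree rT)
    (hoS : ∀ a, ¬ IsStump rS a) (hoT : ∀ b, ¬ IsStump rT b) :
    IsPartialOrder {r₀ : Rel (A × B) // IsElemSubtree rS rT r₀}
      (Relation.ReflTransGen fun V U => LexStep rS rT V.val U.val) ∧
    IsPartialOrder {r₀ : Rel (A × B) // IsElemSubtree rS rT r₀}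
      (Relation.ReflTransGen fun V U =>
        LexStep rS rT V.val U.val ∨ ∀ fs e, V.val fs e → U.val fs e) := by
  let g : {r₀ : Rel (A × B) // IsElemSubtree rS rT r₀} → ℕ := fun V =>
    (vertexPairs rS rT V.val).ncard
  have hg : Monotone g := fun V U hVU =>
    ncard_vertexPairs_le_of_le hS hT hoS hoT U.2 hVU
  have hlex : ∀ V U : {r₀ : Rel (A × B) // IsElemSubtree rS rT r₀},
      LexStep rS rT V.val U.val → g V < g U := fun V U h =>
    h.ncard_vertexPairs_lt hS hT hoS hoT V.2 U.2.1
  exact ⟨isPartialOrder_reflTransGen_of_lt_or_le g hg fun V U h => Or.inl (hlex V U h),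
    isPartialOrder_reflTransGen_of_lt_or_le g hg fun V U h => h.imp (hlex V U) id⟩

end BroadPaper
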